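/- Let (ν_t)_{t∈[0,T]} be a progressively measurable M_+(E)-valued process on a filtered probability space with E[ν_0(E)] < ∞, such that for every φ ∈ C(E) the process t ↦ ⟨φ, ν_t⟩ is a martingale. Then for every bounded continuous Ψ : [0,T] × E → ℝ whose partial derivative ∂_t Ψ exists, is bounded and continuous, the process t ↦ ⟨Ψ(t, ·), ν_t⟩ − ⟨Ψ(0, ·), ν_0⟩ − ∫_0^t ⟨∂_t Ψ(s, ·), ν_s⟩ ds is a martingale on [0,T] (product-rule martingale lemma from the proof of Remark 3.4). -/

import Mathlib

open MeasureTheory Set Filter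

noncomputable section

/-- `M₊(E)`: finite non-negative Borel measures on `E = [0,T]`, with the weak topology. -/
abbrev MV (T : ℝ) := MeasureTheory.FiniteMeasure (Set.Icc (0:ℝ) T)

/-- `⟨φ, ν⟩ = ∫_E φ(x) ν(dx)`. -/
def pairF {T : ℝ} (φ : ℝ → ℝ) (ν : MV T) : ℝ :=
  ∫ x, φ (x : ℝ) ∂(ν : Measure (Set.Icc (0:ℝ) T))

/-- `φ ∈ D₁`: (the restriction to `E` of) a smooth function on `ℝ` with `φ'(0) = 0`. -/
def memD1 (φ : ℝ → ℝ) : Prop := ContDiff ℝ (⊤ : ℕ∞) φ ∧ deriv φ 0 = 0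

/-- A real-valued martingale on the time interval `[a,b]` w.r.t. filtration `ℱ` and measure `Q`. -/
def IsMartOn {Ω : Type*} {m0 : MeasurableSpace Ω} (ℱ : MeasureTheory.Filtration ℝ m0)
    (Q : MeasureTheory.Measure Ω) (a b : ℝ) (X : ℝ → Ω → ℝ) : Prop :=
  (∀ t ∈ Set.Icc a b,
      MeasureTheory.Integrable (X t) Q ∧ StronglyMeasurable[ℱ t] (X t)) ∧
  ∀ s t, s ∈ Set.Icc a b → t ∈ Set.Icc a b → s ≤ t → Q[X t | ℱ s] =ᵐ[Q] X s

/-- A real-valued local martingale on `[a,b]`: there are stopping times increasing a.s. to `b`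
such that each stopped process is a martingale on `[a,b]`. -/
def IsLocalMartOn {Ω : Type*} {m0 : MeasurableSpace Ω} (ℱ : MeasureTheory.Filtration ℝ m0)
    (Q : MeasureTheory.Measure Ω) (a b : ℝ) (X : ℝ → Ω → ℝ) : Prop :=
  ∃ τ : ℕ → Ω → ℝ,
    (∀ n, MeasureTheory.IsStoppingTime ℱ (fun ω => ((τ n ω : ℝ) : WithTop ℝ))) ∧
    (∀ᵐ ω ∂Q, Monotone (fun n => τ n ω) ∧
      Filter.Tendsto (fun n => τ n ω) Filter.atTop (nhds b)) ∧
    ∀ n, IsMartOn ℱ Q a b (fun t ω => X (min t (τ n ω)) ω)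

/-- The HJM drift condition: for all `φ ∈ D₁`, `⟨φ, μ_t⟩ + ∫_0^t ⟨φ', μ_s⟩ ds`
is a local martingale on `[0,T]`. -/
def HJMdrift {T : ℝ} {Ω : Type*} {m0 : MeasurableSpace Ω} (ℱ : MeasureTheory.Filtration ℝ m0)
    (Q : MeasureTheory.Measure Ω) (μ : ℝ → Ω → MV T) : Prop :=
  ∀ φ : ℝ → ℝ, memD1 φ →
    IsLocalMartOn ℱ Q 0 T (fun t ω =>
      pairF φ (μ t ω) + ∫ s in (0:ℝ)..t, pairF (deriv φ) (μ s ω))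

/-!
For `A ∈ ℱ_s` and `s ≤ r ≤ t`, the martingale property of `⟨∂_tΨ(r,·), ν⟩` lets one freeze the
measure at time `s` inside `∫_A`. By Fubini and the fundamental theorem of calculus in `r`, the
`A`-integral of the compensator increment `∫_s^t ⟨∂_tΨ(r,·), ν_r⟩ dr` thus equals
`∫_A ⟨Ψ(t,·) - Ψ(s,·), ν_s⟩`, which the martingale property of `⟨Ψ(t,·), ν⟩` turns into the
`A`-integral of `⟨Ψ(t,·), ν_t⟩ - ⟨Ψ(s,·), ν_s⟩`. Fubini applies because
`|⟨φ, ν_r⟩| ≤ ‖φ‖∞ ν_r(E)` and the total mass is itself a martingale, so `E[ν_r(E)] = E[ν_0(E)]`.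
To work with globally continuous functions, `Ψ` and `∂_tΨ` are first extended off `[0,T]²` by
clamping both arguments into `[0,T]`.
-/
open Function

section Extension

variable {a b : ℝ}

def extendIcc₂ (h : a ≤ b) (Φ : ℝ → ℝ → ℝ) (u x : ℝ) : ℝ :=
  Φ (projIcc a b h u) (projIcc a b h x)

lemma extendIcc₂_of_mem (h : a ≤ b) (Φ : ℝ → ℝ → ℝ) {u x : ℝ} (hu : u ∈ Icc a b)
    (hx : x ∈ Icc a b) : extendIcc₂ h Φ u x = Φ u x := by
  rw [extendIcc₂, projIcc_of_mem h hu, projIcc_of_mem h hx]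

lemma continuous_extendIcc₂ (h : a ≤ b) {Φ : ℝ → ℝ → ℝ}
    (hΦ : ContinuousOn (uncurry Φ) (Icc a b ×ˢ Icc a b)) :
    Continuous (uncurry (extendIcc₂ h Φ)) :=
  hΦ.comp_continuous (f := fun p : ℝ × ℝ => ((projIcc a b h p.1 : ℝ), (projIcc a b h p.2 : ℝ)))
    (by fun_prop) fun p => ⟨(projIcc a b h p.1).2, (projIcc a b h p.2).2⟩

lemma exists_abs_extendIcc₂_le (h : a ≤ b) {Φ : ℝ → ℝ → ℝ}
    (hΦ : ContinuousOn (uncurry Φ) (Icc a b ×ˢ Icc a b)) :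
    ∃ C, ∀ u x, |extendIcc₂ h Φ u x| ≤ C := by
  obtain ⟨C, hC⟩ := (isCompact_Icc.prod isCompact_Icc).exists_bound_of_continuousOn hΦ
  exact ⟨C, fun u x => hC (_, _) ⟨(projIcc a b h u).2, (projIcc a b h x).2⟩⟩

lemma hasDerivAt_extendIcc₂ (h : a ≤ b) {Φ Φ' : ℝ → ℝ → ℝ} {x r : ℝ} (hx : x ∈ Icc a b)
    (hr : r ∈ Ioo a b) (hΦ : HasDerivWithinAt (fun τ => Φ τ x) (Φ' r x) (Icc a b) r) :
    HasDerivAt (fun τ => extendIcc₂ h Φ τ x) (extendIcc₂ h Φ' r x) r := by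
  rw [extendIcc₂_of_mem h Φ' (Ioo_subset_Icc_self hr) hx]
  exact (hΦ.congr (fun τ hτ => extendIcc₂_of_mem h Φ hτ hx)
    (extendIcc₂_of_mem h Φ (Ioo_subset_Icc_self hr) hx)).hasDerivAt (Icc_mem_nhds hr.1 hr.2)

end Extension

lemma MeasureTheory.FiniteMeasure.measureReal_univ_eq_mass {Ω : Type*} [MeasurableSpace Ω]
    (μ : FiniteMeasure Ω) :
    (μ : Measure Ω).real univ = μ.mass := by
  rw [measureReal_def, ← FiniteMeasure.ennreal_mass, ENNReal.coe_toReal]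

section Pairing

variable {T : ℝ}

lemma pairF_congr {φ ψ : ℝ → ℝ} (h : EqOn φ ψ (Icc 0 T)) (ν : MV T) :
    pairF φ ν = pairF ψ ν :=
  integral_congr_ae (Eventually.of_forall fun x => h x.2)

lemma pairF_one (ν : MV T) : pairF (fun _ => 1) ν = ν.mass := by
  rw [pairF, integral_const, smul_eq_mul, mul_one, FiniteMeasure.measureReal_univ_eq_mass]

lemma abs_pairF_le {φ : ℝ → ℝ} {C : ℝ} (h : ∀ x ∈ Icc 0 T, |φ x| ≤ C) (ν : MV T) :
    |pairF φ ν| ≤ C * ν.mass := by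
  rw [← FiniteMeasure.measureReal_univ_eq_mass, ← Real.norm_eq_abs]
  exact norm_integral_le_of_norm_le_const (Eventually.of_forall fun x => h x x.2)

lemma integrable_pairF_integrand {φ : ℝ → ℝ} (hφ : ContinuousOn φ (Icc 0 T)) (ν : MV T) :
    Integrable (fun x : Icc (0:ℝ) T => φ x) (ν : Measure (Icc (0:ℝ) T)) :=
  (BoundedContinuousFunction.mkOfCompact ⟨_, hφ.domRestrict⟩).integrable _

lemma pairF_sub {φ ψ : ℝ → ℝ} (hφ : ContinuousOn φ (Icc 0 T)) (hψ : ContinuousOn ψ (Icc 0 T))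
    (ν : MV T) : pairF (fun x => φ x - ψ x) ν = pairF φ ν - pairF ψ ν :=
  integral_sub (integrable_pairF_integrand hφ ν) (integrable_pairF_integrand hψ ν)

lemma continuous_pairF {Φ : ℝ → ℝ → ℝ} (hΦ : Continuous (uncurry Φ)) (ν : MV T) :
    Continuous fun v => pairF (Φ v) ν := by
  have := continuous_parametric_integral_of_continuous (μ := (ν : Measure (Icc (0:ℝ) T)))
    (f := fun v (x : Icc (0:ℝ) T) => Φ v x) (by fun_prop) isCompact_univ
  rw [Measure.restrict_univ] at this
  exact this

lemma pairF_extendIcc₂ (hT : 0 ≤ T) (Φ : ℝ → ℝ → ℝ) {u : ℝ} (hu : u ∈ Icc 0 T)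
    (ν : MV T) : pairF (extendIcc₂ hT Φ u) ν = pairF (Φ u) ν :=
  pairF_congr (fun _ hx => extendIcc₂_of_mem hT Φ hu hx) ν

lemma stronglyMeasurable_pairF_uncurry {α : Type*} [MeasurableSpace α] {V : α → MV T}
    (hV : ∀ φ : ℝ → ℝ, Measurable φ → StronglyMeasurable fun a => pairF φ (V a))
    {Φ : ℝ → ℝ → ℝ} (hΦ : Continuous (uncurry Φ)) :
    StronglyMeasurable fun p : ℝ × α => pairF (Φ p.1) (V p.2) :=
  stronglyMeasurable_uncurry_of_continuous_of_stronglyMeasurable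
    (fun a => continuous_pairF hΦ (V a)) fun v => hV _ (hΦ.uncurry_left v).measurable

lemma integral_Ioc_pairF_eq_sub {Φ Φ' : ℝ → ℝ → ℝ} (hΦ : Continuous (uncurry Φ))
    (hΦ' : Continuous (uncurry Φ')) {s t : ℝ} (hst : s ≤ t)
    (hder : ∀ x ∈ Icc 0 T, ∀ r ∈ Ioo s t, HasDerivAt (fun τ => Φ τ x) (Φ' r x) r) (ν : MV T) :
    ∫ r in Ioc s t, pairF (Φ' r) ν = pairF (Φ t) ν - pairF (Φ s) ν := by
  have hftc : ∀ x : Icc (0:ℝ) T, ∫ r in Ioc s t, Φ' r x = Φ t x - Φ s x := fun x => by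
    rw [← intervalIntegral.integral_of_le hst]
    exact intervalIntegral.integral_eq_sub_of_hasDerivAt_of_le hst
      (hΦ.uncurry_right (x : ℝ)).continuousOn (hder x x.2)
      ((hΦ'.uncurry_right (x : ℝ)).intervalIntegrable _ _)
  have hint : Integrable (uncurry fun (x : Icc (0:ℝ) T) r => Φ' r x)
      ((ν : Measure (Icc (0:ℝ) T)).prod (volume.restrict (Ioc s t))) := by
    rw [← Measure.restrict_univ (μ := (ν : Measure (Icc (0:ℝ) T))), Measure.prod_restrict]
    refine ((Continuous.continuousOn (by fun_prop)).integrableOn_compact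
      (isCompact_univ.prod isCompact_Icc)).mono_set (prod_mono subset_rfl Ioc_subset_Icc_self)
  calc ∫ r in Ioc s t, pairF (Φ' r) ν
      = ∫ x : Icc (0:ℝ) T, (∫ r in Ioc s t, Φ' r x) ∂(ν : Measure (Icc (0:ℝ) T)) :=
        (integral_integral_swap hint).symm
    _ = pairF (Φ t) ν - pairF (Φ s) ν := by
        simp only [hftc]
        exact pairF_sub (hΦ.uncurry_left t).continuousOn (hΦ.uncurry_left s).continuousOn ν

end Pairing

section Martingale

variable {Ω : Type*} {m0 : MeasurableSpace Ω} {ℱ : Filtration ℝ m0} {Q : Measure Ω} {a b : ℝ}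

lemma IsMartOn.congr {X Y : ℝ → Ω → ℝ} (hX : IsMartOn ℱ Q a b X)
    (h : ∀ t ∈ Icc a b, X t = Y t) : IsMartOn ℱ Q a b Y := by
  refine ⟨fun t ht => h t ht ▸ hX.1 t ht, fun s t hs ht hst => ?_⟩
  rw [← h t ht, ← h s hs]
  exact hX.2 s t hs ht hst

lemma IsMartOn.setIntegral_eq [IsFiniteMeasure Q] {X : ℝ → Ω → ℝ} (hX : IsMartOn ℱ Q a b X)
    {s t : ℝ} (hs : s ∈ Icc a b) (ht : t ∈ Icc a b) (hst : s ≤ t) {A : Set Ω}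
    (hA : MeasurableSet[ℱ s] A) : ∫ ω in A, X t ω ∂Q = ∫ ω in A, X s ω ∂Q := by
  rw [← setIntegral_condExp (ℱ.le s) (hX.1 t ht).1 hA]
  exact setIntegral_congr_ae (ℱ.le s A hA) ((hX.2 s t hs ht hst).mono fun ω hω _ => hω)

lemma isMartOn_of_setIntegral_eq [IsFiniteMeasure Q] {X : ℝ → Ω → ℝ}
    (hint : ∀ t ∈ Icc a b, Integrable (X t) Q)
    (hadapt : ∀ t ∈ Icc a b, StronglyMeasurable[ℱ t] (X t))
    (hset : ∀ s t, s ∈ Icc a b → t ∈ Icc a b → s ≤ t → ∀ A, MeasurableSet[ℱ s] A →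
      ∫ ω in A, X t ω ∂Q = ∫ ω in A, X s ω ∂Q) :
    IsMartOn ℱ Q a b X :=
  ⟨fun t ht => ⟨hint t ht, hadapt t ht⟩, fun s t hs ht hst =>
    (ae_eq_condExp_of_forall_setIntegral_eq (ℱ.le s) (hint t ht)
      (fun _ _ _ => (hint s hs).integrableOn) (fun A hA _ => (hset s t hs ht hst A hA).symm)
      (hadapt s hs).aestronglyMeasurable).symm⟩

end Martingale

lemma stronglyMeasurable_pairF_min {T : ℝ} {Ω : Type*} [mΩ : MeasurableSpace Ω]
    {ν : ℝ → Ω → MV T} {t : ℝ}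
    (hν : ∀ φ : ℝ → ℝ, Measurable φ →
      StronglyMeasurable fun p : Iic t × Ω => pairF φ (ν p.1 p.2))
    {Φ : ℝ → ℝ → ℝ} (hΦ : Continuous (uncurry Φ)) :
    StronglyMeasurable fun p : ℝ × Ω => pairF (Φ p.1) (ν (min p.1 t) p.2) := by
  have hmin : Measurable fun p : ℝ × Ω =>
      ((⟨min p.1 t, mem_Iic.2 (min_le_right _ _)⟩ : Iic t), p.2) :=
    (measurable_fst.min measurable_const).subtype_mk.prodMk measurable_snd
  exact (stronglyMeasurable_pairF_uncurry (V := fun p : ℝ × Ω => ν (min p.1 t) p.2)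
    (fun φ hφ => (hν φ hφ).comp_measurable hmin) hΦ).comp_measurable
    (measurable_fst.prodMk measurable_id)

lemma stronglyMeasurable_setIntegral_pairF {T : ℝ} {Ω : Type*} [mΩ : MeasurableSpace Ω]
    {ν : ℝ → Ω → MV T} {t : ℝ}
    (hν : ∀ φ : ℝ → ℝ, Measurable φ →
      StronglyMeasurable fun p : Iic t × Ω => pairF φ (ν p.1 p.2))
    {Φ : ℝ → ℝ → ℝ} (hΦ : Continuous (uncurry Φ)) :
    StronglyMeasurable fun ω => ∫ r in Ioc 0 t, pairF (Φ r) (ν r ω) := by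
  convert (stronglyMeasurable_pairF_min hν hΦ).integral_prod_left'
    (μ := volume.restrict (Ioc 0 t)) using 2 with ω
  exact setIntegral_congr_fun measurableSet_Ioc fun r hr => by simp only [min_eq_left hr.2]

lemma integrable_prod_pairF_of_integral_mass_le {T : ℝ} {α : Type*} [MeasurableSpace α]
    {μ : Measure α} [SFinite μ] {ρ : Measure ℝ} [IsFiniteMeasure ρ] {W : ℝ → α → MV T}
    {Φ : ℝ → ℝ → ℝ} {C M : ℝ}
    (hC : ∀ r x, |Φ r x| ≤ C)
    (hmeas : AEStronglyMeasurable (fun p : ℝ × α => pairF (Φ p.1) (W p.1 p.2)) (ρ.prod μ))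
    (hmass : ∀ᵐ r ∂ρ, Integrable (fun a => ((W r a).mass : ℝ)) μ ∧
      ∫ a, ((W r a).mass : ℝ) ∂μ ≤ M) :
    Integrable (fun p : ℝ × α => pairF (Φ p.1) (W p.1 p.2)) (ρ.prod μ) := by
  have hdom : ∀ r a, ‖pairF (Φ r) (W r a)‖ ≤ C * (W r a).mass := fun r a =>
    abs_pairF_le (fun x _ => hC r x) (W r a)
  have hslice : ∀ᵐ r ∂ρ, Integrable (fun a => pairF (Φ r) (W r a)) μ := by
    filter_upwards [hmass, hmeas.prodMk_left] with r hr hr'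
    exact (hr.1.const_mul C).mono' hr' (Eventually.of_forall (hdom r))
  refine (integrable_prod_iff hmeas).2 ⟨hslice, ?_⟩
  refine (integrable_const (C * M)).mono' hmeas.norm.integral_prod_right' ?_
  filter_upwards [hmass, hslice] with r hr hr'
  rw [Real.norm_of_nonneg (integral_nonneg fun _ => norm_nonneg _)]
  calc ∫ a, ‖pairF (Φ r) (W r a)‖ ∂μ
      ≤ ∫ a, C * ((W r a).mass : ℝ) ∂μ := integral_mono hr'.norm (hr.1.const_mul C) (hdom r)
    _ = C * ∫ a, ((W r a).mass : ℝ) ∂μ := integral_const_mul C _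
    _ ≤ C * M := mul_le_mul_of_nonneg_left hr.2 ((abs_nonneg _).trans (hC 0 0))

lemma ae_integral_Ioc_eq_add {Ω : Type*} [MeasurableSpace Ω] {Q : Measure Ω} [SFinite Q]
    {f : ℝ → Ω → ℝ} {a b c : ℝ} (hab : a ≤ b) (hbc : b ≤ c)
    (hf : Integrable (uncurry f) ((volume.restrict (Ioc a c)).prod Q)) :
    ∀ᵐ ω ∂Q, ∫ r in Ioc a c, f r ω = (∫ r in Ioc a b, f r ω) + ∫ r in Ioc b c, f r ω := by
  filter_upwards [hf.prod_left_ae] with ω hω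
  have hω' : IntegrableOn (fun r => f r ω) (Ioc a b ∪ Ioc b c) := by
    rwa [Ioc_union_Ioc_eq_Ioc hab hbc]
  rw [← Ioc_union_Ioc_eq_Ioc hab hbc]
  exact setIntegral_union (Ioc_disjoint_Ioc_of_le le_rfl) measurableSet_Ioc
    (hω'.mono_set subset_union_left) (hω'.mono_set subset_union_right)

section MeasureValuedProcess

variable {T : ℝ} {Ω : Type*} {m0 : MeasurableSpace Ω} {ℱ : Filtration ℝ m0} {Q : Measure Ω}
  {ν : ℝ → Ω → MV T}

lemma isMartOn_mass
    (hmart : ∀ φ : ℝ → ℝ, ContinuousOn φ (Icc 0 T) →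
      IsMartOn ℱ Q 0 T fun t ω => pairF φ (ν t ω)) :
    IsMartOn ℱ Q 0 T fun t ω => ((ν t ω).mass : ℝ) :=
  (hmart _ continuousOn_const).congr fun _ _ => funext fun ω => pairF_one (ν _ ω)

lemma aestronglyMeasurable_pairF_restrict_Ioc_prod [SFinite Q]
    (hprog : ∀ φ : ℝ → ℝ, Measurable φ → IsStronglyProgressive ℱ fun t ω => pairF φ (ν t ω))
    {Φ : ℝ → ℝ → ℝ} (hΦ : Continuous (uncurry Φ)) (s t : ℝ) :
    AEStronglyMeasurable (fun p : ℝ × Ω => pairF (Φ p.1) (ν p.1 p.2))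
      ((volume.restrict (Ioc s t)).prod Q) := by
  have h := stronglyMeasurable_pairF_min (mΩ := m0) (t := t)
    (fun φ hφ => (hprog φ hφ t).mono (sup_le_sup le_rfl (MeasurableSpace.comap_mono (ℱ.le t))))
    hΦ
  refine h.aestronglyMeasurable.congr ?_
  rw [← Measure.restrict_univ (μ := Q), Measure.prod_restrict]
  refine ae_restrict_of_forall_mem (measurableSet_Ioc.prod MeasurableSet.univ) ?_
  rintro ⟨r, ω⟩ ⟨hr, -⟩
  simp only [min_eq_left hr.2]

lemma integrable_pairF_restrict_Ioc_prod [IsFiniteMeasure Q]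
    (hprog : ∀ φ : ℝ → ℝ, Measurable φ → IsStronglyProgressive ℱ fun t ω => pairF φ (ν t ω))
    (hmart : ∀ φ : ℝ → ℝ, ContinuousOn φ (Icc 0 T) →
      IsMartOn ℱ Q 0 T fun t ω => pairF φ (ν t ω))
    {Φ : ℝ → ℝ → ℝ} (hΦ : Continuous (uncurry Φ)) {C : ℝ} (hC : ∀ r x, |Φ r x| ≤ C)
    {s t : ℝ} (hs : 0 ≤ s) (ht : t ≤ T) :
    Integrable (fun p : ℝ × Ω => pairF (Φ p.1) (ν p.1 p.2))
      ((volume.restrict (Ioc s t)).prod Q) := by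
  refine integrable_prod_pairF_of_integral_mass_le (M := ∫ ω, ((ν 0 ω).mass : ℝ) ∂Q) hC
    (aestronglyMeasurable_pairF_restrict_Ioc_prod hprog hΦ s t) ?_
  refine ae_restrict_of_forall_mem measurableSet_Ioc fun r hr => ?_
  have hr' : r ∈ Icc 0 T := ⟨hs.trans hr.1.le, hr.2.trans ht⟩
  refine ⟨((isMartOn_mass hmart).1 r hr').1, le_of_eq ?_⟩
  simpa only [Measure.restrict_univ] using (isMartOn_mass hmart).setIntegral_eq
    ⟨le_rfl, hr'.1.trans hr'.2⟩ hr' hr'.1 MeasurableSet.univ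

lemma setIntegral_integral_Ioc_pairF_eq [IsFiniteMeasure Q]
    (hprog : ∀ φ : ℝ → ℝ, Measurable φ → IsStronglyProgressive ℱ fun t ω => pairF φ (ν t ω))
    (hmart : ∀ φ : ℝ → ℝ, ContinuousOn φ (Icc 0 T) →
      IsMartOn ℱ Q 0 T fun t ω => pairF φ (ν t ω))
    {Φ Φ' : ℝ → ℝ → ℝ} (hΦ : Continuous (uncurry Φ)) (hΦ' : Continuous (uncurry Φ'))
    {C : ℝ} (hC : ∀ r x, |Φ' r x| ≤ C) {s t : ℝ} (hs : 0 ≤ s) (hst : s ≤ t) (ht : t ≤ T)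
    (hder : ∀ x ∈ Icc 0 T, ∀ r ∈ Ioo s t, HasDerivAt (fun τ => Φ τ x) (Φ' r x) r)
    {A : Set Ω} (hA : MeasurableSet[ℱ s] A) :
    ∫ ω in A, (∫ r in Ioc s t, pairF (Φ' r) (ν r ω)) ∂Q
      = ∫ ω in A, (pairF (Φ t) (ν s ω) - pairF (Φ s) (ν s ω)) ∂Q := by
  have hs' : s ∈ Icc 0 T := ⟨hs, hst.trans ht⟩
  have hfrozen : Integrable (fun p : ℝ × Ω => pairF (Φ' p.1) (ν s p.2))
      ((volume.restrict (Ioc s t)).prod Q) :=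
    integrable_prod_pairF_of_integral_mass_le (W := fun _ => ν s)
      (M := ∫ ω, ((ν s ω).mass : ℝ) ∂Q) hC
      (stronglyMeasurable_pairF_uncurry
        (fun φ hφ => ((hprog φ hφ).stronglyAdapted s).mono (ℱ.le s)) hΦ').aestronglyMeasurable
      (Eventually.of_forall fun _ => ⟨((isMartOn_mass hmart).1 s hs').1, le_rfl⟩)
  have hA' : (volume.restrict (Ioc s t)).prod (Q.restrict A)
      ≤ (volume.restrict (Ioc s t)).prod Q :=
    Measure.prod_mono le_rfl Measure.restrict_le_self
  calc ∫ ω in A, (∫ r in Ioc s t, pairF (Φ' r) (ν r ω)) ∂Q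
      = ∫ r in Ioc s t, ∫ ω in A, pairF (Φ' r) (ν r ω) ∂Q :=
        (integral_integral_swap
          ((integrable_pairF_restrict_Ioc_prod hprog hmart hΦ' hC hs ht).mono_measure hA')).symm
    _ = ∫ r in Ioc s t, ∫ ω in A, pairF (Φ' r) (ν s ω) ∂Q :=
        setIntegral_congr_fun measurableSet_Ioc fun r hr =>
          (hmart _ (hΦ'.uncurry_left r).continuousOn).setIntegral_eq hs'
            ⟨hs.trans hr.1.le, hr.2.trans ht⟩ hr.1.le hA
    _ = ∫ ω in A, (∫ r in Ioc s t, pairF (Φ' r) (ν s ω)) ∂Q :=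
        integral_integral_swap (hfrozen.mono_measure hA')
    _ = ∫ ω in A, (pairF (Φ t) (ν s ω) - pairF (Φ s) (ν s ω)) ∂Q := by
        simp only [integral_Ioc_pairF_eq_sub hΦ hΦ' hst hder]

theorem isMartOn_pairF_sub_setIntegral [IsFiniteMeasure Q]
    (hprog : ∀ φ : ℝ → ℝ, Measurable φ → IsStronglyProgressive ℱ fun t ω => pairF φ (ν t ω))
    (hmart : ∀ φ : ℝ → ℝ, ContinuousOn φ (Icc 0 T) →
      IsMartOn ℱ Q 0 T fun t ω => pairF φ (ν t ω))
    {Φ Φ' : ℝ → ℝ → ℝ} (hΦ : Continuous (uncurry Φ)) (hΦ' : Continuous (uncurry Φ'))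
    {C : ℝ} (hC : ∀ r x, |Φ' r x| ≤ C)
    (hder : ∀ x ∈ Icc 0 T, ∀ r ∈ Ioo 0 T, HasDerivAt (fun τ => Φ τ x) (Φ' r x) r) :
    IsMartOn ℱ Q 0 T fun t ω =>
      pairF (Φ t) (ν t ω) - pairF (Φ 0) (ν 0 ω) - ∫ r in Ioc 0 t, pairF (Φ' r) (ν r ω) := by
  set X : ℝ → Ω → ℝ := fun t ω => pairF (Φ t) (ν t ω)
  set I : ℝ → ℝ → Ω → ℝ := fun s t ω => ∫ r in Ioc s t, pairF (Φ' r) (ν r ω)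
  have hXmart (u : ℝ) : IsMartOn ℱ Q 0 T fun t ω => pairF (Φ u) (ν t ω) :=
    hmart _ (hΦ.uncurry_left u).continuousOn
  have hX (t : ℝ) (ht : t ∈ Icc 0 T) : Integrable (X t) Q := ((hXmart t).1 t ht).1
  have hI {s t : ℝ} (hs : 0 ≤ s) (ht : t ≤ T) : Integrable (I s t) Q :=
    (integrable_pairF_restrict_Ioc_prod hprog hmart hΦ' hC hs ht).integral_prod_right
  refine isMartOn_of_setIntegral_eq
    (fun t ht => ((hX t ht).sub (hX 0 ⟨le_rfl, ht.1.trans ht.2⟩)).sub (hI le_rfl ht.2))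
    (fun t ht => (((hprog _ (hΦ.uncurry_left t).measurable).stronglyAdapted t).sub
      (((hprog _ (hΦ.uncurry_left 0).measurable).stronglyAdapted 0).mono (ℱ.mono ht.1))).sub
      (stronglyMeasurable_setIntegral_pairF (mΩ := ℱ t) (fun φ hφ => hprog φ hφ t) hΦ'))
    fun s t hs ht hst A hA => ?_
  have h0 : (0 : ℝ) ∈ Icc 0 T := ⟨le_rfl, hs.1.trans hs.2⟩
  have hexpand {u : ℝ} (hu : u ∈ Icc 0 T) :
      ∫ ω in A, (X u ω - X 0 ω - I 0 u ω) ∂Q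
        = ∫ ω in A, X u ω ∂Q - ∫ ω in A, X 0 ω ∂Q - ∫ ω in A, I 0 u ω ∂Q := by
    rw [integral_sub (f := fun ω => X u ω - X 0 ω) ((hX u hu).sub (hX 0 h0)).integrableOn
        (hI le_rfl hu.2).integrableOn,
      integral_sub (hX u hu).integrableOn (hX 0 h0).integrableOn]
  have hsplit : ∫ ω in A, I 0 t ω ∂Q = ∫ ω in A, I 0 s ω ∂Q + ∫ ω in A, I s t ω ∂Q := by
    rw [← integral_add (hI le_rfl hs.2).integrableOn (hI hs.1 ht.2).integrableOn]
    exact integral_congr_ae (ae_restrict_of_ae (ae_integral_Ioc_eq_add hs.1 hst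
      (integrable_pairF_restrict_Ioc_prod hprog hmart hΦ' hC le_rfl ht.2)))
  have hcomp : ∫ ω in A, I s t ω ∂Q
      = ∫ ω in A, pairF (Φ t) (ν s ω) ∂Q - ∫ ω in A, X s ω ∂Q := by
    rw [setIntegral_integral_Ioc_pairF_eq hprog hmart hΦ hΦ' hC hs.1 hst ht.2
      (fun x hx r hr => hder x hx r ⟨hs.1.trans_lt hr.1, hr.2.trans_le ht.2⟩) hA]
    exact integral_sub ((hXmart t).1 s hs).1.integrableOn (hX s hs).integrableOn
  have hfreeze : ∫ ω in A, X t ω ∂Q = ∫ ω in A, pairF (Φ t) (ν s ω) ∂Q :=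
    (hXmart t).setIntegral_eq hs ht hst hA
  rw [hexpand ht, hexpand hs]
  linarith

end MeasureValuedProcess

theorem stmt13_general {T : ℝ} (hT : 0 < T)
    {Ω : Type*} {m0 : MeasurableSpace Ω} (ℱ : Filtration ℝ m0)
    (Q : Measure Ω) [IsProbabilityMeasure Q]
    (ν : ℝ → Ω → MV T)
    (hprog : ∀ φ : ℝ → ℝ, Measurable φ →
      ProgMeasurable ℱ (fun t ω => pairF φ (ν t ω)))
    (hmart : ∀ φ : ℝ → ℝ, ContinuousOn φ (Icc (0:ℝ) T) →
      IsMartOn ℱ Q 0 T (fun t ω => pairF φ (ν t ω)))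
    (Ψ Ψt : ℝ → ℝ → ℝ)
    (hΨcont : ContinuousOn (fun p : ℝ × ℝ => Ψ p.1 p.2) (Icc (0:ℝ) T ×ˢ Icc (0:ℝ) T))
    (hΨt : ∀ x ∈ Icc (0:ℝ) T, ∀ t ∈ Icc (0:ℝ) T,
      HasDerivWithinAt (fun τ => Ψ τ x) (Ψt t x) (Icc (0:ℝ) T) t)
    (hΨtcont : ContinuousOn (fun p : ℝ × ℝ => Ψt p.1 p.2) (Icc (0:ℝ) T ×ˢ Icc (0:ℝ) T)) :
    IsMartOn ℱ Q 0 T (fun t ω =>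
      pairF (fun x => Ψ t x) (ν t ω) - pairF (fun x => Ψ 0 x) (ν 0 ω)
        - ∫ s in (0:ℝ)..t, pairF (fun x => Ψt s x) (ν s ω)) := by
  obtain ⟨C, hC⟩ := exists_abs_extendIcc₂_le hT.le hΨtcont
  refine (isMartOn_pairF_sub_setIntegral hprog hmart (continuous_extendIcc₂ hT.le hΨcont)
    (continuous_extendIcc₂ hT.le hΨtcont) hC fun x hx r hr =>
      hasDerivAt_extendIcc₂ hT.le hx hr (hΨt x hx r (Ioo_subset_Icc_self hr))).congr
    fun t ht => funext fun ω => ?_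
  rw [intervalIntegral.integral_of_le ht.1, pairF_extendIcc₂ hT.le Ψ ht,
    pairF_extendIcc₂ hT.le Ψ ⟨le_rfl, hT.le⟩, setIntegral_congr_fun measurableSet_Ioc
      fun r hr => pairF_extendIcc₂ hT.le Ψt ⟨hr.1.le, hr.2.trans ht.2⟩ (ν r ω)]

/-- **Product-rule martingale lemma (proof of Remark 3.4).** If `⟨φ, ν_t⟩` is a martingale
for every `φ ∈ C(E)` and `E[ν_0(E)] < ∞`, then for every bounded continuous
`Ψ : [0,T] × E → ℝ` with bounded continuous time derivative `∂_t Ψ`, the process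
`⟨Ψ(t,·), ν_t⟩ − ⟨Ψ(0,·), ν_0⟩ − ∫_0^t ⟨∂_t Ψ(s,·), ν_s⟩ ds` is a martingale on `[0,T]`. -/
theorem stmt13 {T : ℝ} (hT : 0 < T)
    {Ω : Type*} {m0 : MeasurableSpace Ω} (ℱ : Filtration ℝ m0)
    (Q : Measure Ω) [IsProbabilityMeasure Q]
    (ν : ℝ → Ω → MV T)
    (hprog : ∀ φ : ℝ → ℝ, Measurable φ →
      ProgMeasurable ℱ (fun t ω => pairF φ (ν t ω)))
    (hint : Integrable (fun ω => (((ν 0 ω).mass : ℝ))) Q)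
    (hmart : ∀ φ : ℝ → ℝ, ContinuousOn φ (Icc (0:ℝ) T) →
      IsMartOn ℱ Q 0 T (fun t ω => pairF φ (ν t ω)))
    (Ψ Ψt : ℝ → ℝ → ℝ)
    (hΨcont : ContinuousOn (fun p : ℝ × ℝ => Ψ p.1 p.2) (Icc (0:ℝ) T ×ˢ Icc (0:ℝ) T))
    (hΨbdd : ∃ C : ℝ, ∀ t ∈ Icc (0:ℝ) T, ∀ x ∈ Icc (0:ℝ) T, |Ψ t x| ≤ C)
    (hΨt : ∀ x ∈ Icc (0:ℝ) T, ∀ t ∈ Icc (0:ℝ) T,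
      HasDerivWithinAt (fun τ => Ψ τ x) (Ψt t x) (Icc (0:ℝ) T) t)
    (hΨtcont : ContinuousOn (fun p : ℝ × ℝ => Ψt p.1 p.2) (Icc (0:ℝ) T ×ˢ Icc (0:ℝ) T))
    (hΨtbdd : ∃ C : ℝ, ∀ t ∈ Icc (0:ℝ) T, ∀ x ∈ Icc (0:ℝ) T, |Ψt t x| ≤ C) :
    IsMartOn ℱ Q 0 T (fun t ω =>
      pairF (fun x => Ψ t x) (ν t ω) - pairF (fun x => Ψ 0 x) (ν 0 ω)
        - ∫ s in (0:ℝ)..t, pairF (fun x => Ψt s x) (ν s ω)) :=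
  stmt13_general hT ℱ Q ν hprog hmart Ψ Ψt hΨcont hΨt hΨtcont
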